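/- arXiv:2507.03980 — 7 statements merged into one kernel-verified Lean document; each statement's English description precedes it below -/
import Mathlib

section
/- Vandermonde's identity in the generator semiring: for every k : ℕ and all lists xs ys : List α, the list List.sublistsLen k (xs ++ ys) of all k-element sublists of xs ++ ys is a permutation of (List.range (k+1)).flatMap (fun j => cross (List.sublistsLen (k−j) xs) (List.sublistsLen j ys)), i.e., every k-combination of xs ++ ys arises exactly once as the concatenation of a (k−j)-combination of xs with a j-combination of ys for some 0 ≤ j ≤ k. -/
variable {α : Type*}

/-- Cross-join: concatenate each element of `xss` with each element of `yss`. -/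
def cross (xss yss : List (List α)) : List (List α) :=
  xss.flatMap (fun x => yss.map (fun y => x ++ y))

theorem cross_append_left (a b c : List (List α)) :
    cross (a ++ b) c = cross a c ++ cross b c := by
  simp [cross]

theorem cross_map_cons (x : α) (a c : List (List α)) :
    cross (a.map (x :: ·)) c = (cross a c).map (x :: ·) := by
  simp [cross, List.map_flatMap, List.flatMap_map, List.map_map, Function.comp_def]

theorem cross_nil_left (c : List (List α)) : cross [[]] c = c := by
  simp [cross]

/-- Vandermonde's identity in the generator semiring. -/
theorem sublistsLen_append_perm_flatMap_cross (k : ℕ) (xs ys : List α) :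
    (List.sublistsLen k (xs ++ ys)).Perm
      ((List.range (k + 1)).flatMap
        (fun j => cross (List.sublistsLen (k - j) xs) (List.sublistsLen j ys))) := by
  induction xs generalizing k with
  | nil =>
    have h : ∀ j ∈ List.range k,
        cross (List.sublistsLen (k - j) ([] : List α)) (List.sublistsLen j ys) = [] := by
      intro j hj
      rw [List.mem_range] at hj
      obtain ⟨m, hm⟩ : ∃ m, k - j = m + 1 := ⟨k - j - 1, by omega⟩
      simp [hm, cross]
    rw [List.range_succ, List.flatMap_append, List.flatMap_eq_nil_iff.mpr h]
    simp [cross_nil_left]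
  | cons x xs ih =>
    cases k with
    | zero => simp [cross, List.range_succ]
    | succ k =>
      rw [List.cons_append, List.sublistsLen_succ_cons]
      have hsplit : (List.range (k + 1 + 1)).flatMap
          (fun j => cross (List.sublistsLen (k + 1 - j) (x :: xs)) (List.sublistsLen j ys))
          = (List.range (k + 1)).flatMap
            (fun j => cross (List.sublistsLen (k + 1 - j) xs) (List.sublistsLen j ys)
              ++ ((cross (List.sublistsLen (k - j) xs) (List.sublistsLen j ys)).map (x :: ·)))
            ++ cross (List.sublistsLen 0 (x :: xs)) (List.sublistsLen (k + 1) ys) := by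
        rw [List.range_succ, List.flatMap_append]
        simp only [List.flatMap_cons, List.flatMap_nil, List.append_nil, Nat.sub_self]
        congr 1
        apply List.flatMap_congr
        intro j hj
        rw [List.mem_range] at hj
        have : k + 1 - j = (k - j) + 1 := by omega
        rw [this, List.sublistsLen_succ_cons, cross_append_left, cross_map_cons]
      rw [hsplit]
      have h1 := ih (k + 1)
      have h2 := (ih k).map (x :: ·)
      refine (h1.append h2).trans ?_
      have h3 := (List.flatMap_append_perm (List.range (k + 1))
        (fun j => cross (List.sublistsLen (k + 1 - j) xs) (List.sublistsLen j ys))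
        (fun j => ((cross (List.sublistsLen (k - j) xs) (List.sublistsLen j ys)).map (x :: ·))))
      refine List.Perm.trans ?_ (h3.append_right _)
      rw [← List.map_flatMap, List.sublistsLen_zero, cross_nil_left]
      rw [show (k + 1 + 1) = (k + 1) + 1 from rfl, List.range_succ, List.flatMap_append]
      simp only [List.flatMap_cons, List.flatMap_nil, List.append_nil, Nat.add_sub_cancel_left,
        List.sublistsLen_zero, cross_nil_left, Nat.sub_self]
      rw [List.append_assoc, List.append_assoc]
      exact List.Perm.append_left _ List.perm_append_comm
end

section
/- Correctness of the sequential K-combination generator: for every K : ℕ and every list xs : List α, kcombs K xs has length K+1, and for every k ≤ K the k-th entry (kcombs K xs)[k] is a permutation of List.sublistsLen k xs, the list of all k-element sublists of xs. -/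
variable {α : Type*}

/-- One sequential step of the K-combination generator (for `css` of length K+1). -/
def forStep (x : α) (css : List (List (List α))) : List (List (List α)) :=
  [[[]]] ++ (List.range (css.length - 1)).map
    (fun i => (css.getD i []).map (x :: ·) ++ css.getD (i + 1) [])

/-- Sequential K-combination generator. -/
def kcombs (K : ℕ) : List α → List (List (List α))
  | [] => [[[]]] ++ List.replicate K []
  | x :: xs => forStep x (kcombs K xs)

/-- Correctness of the sequential K-combination generator. -/
theorem kcombs_correct (K : ℕ) (xs : List α) :
    (kcombs K xs).length = K + 1 ∧
      ∀ k ≤ K, ((kcombs K xs).getD k []).Perm (List.sublistsLen k xs) := by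
  induction xs with
  | nil =>
    constructor
    · simp [kcombs]
    · intro k hk
      match k with
      | 0 => simp [kcombs]
      | k + 1 =>
        have h1 : (kcombs K ([] : List α)).getD (k + 1) [] = [] := by
          simp only [kcombs, List.cons_append, List.nil_append, List.getD_cons_succ]
          rcases Nat.lt_or_ge k K with h | h
          · rw [List.getD_eq_getElem _ _ (by simpa)]
            simp
          · rw [List.getD_eq_default _ _ (by simpa)]
        rw [h1]
        rw [List.sublistsLen_of_length_lt (by simp)]
  | cons x xs ih =>
    obtain ⟨hlen, hperm⟩ := ih
    have hstep : kcombs K (x :: xs) = forStep x (kcombs K xs) := rfl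
    have hlen' : (forStep x (kcombs K xs)).length = K + 1 := by
      simp [forStep, hlen]
    constructor
    · rw [hstep]; exact hlen'
    · intro k hk
      match k with
      | 0 => simp [kcombs, forStep]
      | k + 1 =>
        have hk' : k < K := hk
        have h2 : (kcombs K (x :: xs)).getD (k + 1) []
            = ((kcombs K xs).getD k []).map (x :: ·) ++ (kcombs K xs).getD (k + 1) [] := by
          rw [hstep]
          simp only [forStep, hlen, Nat.add_sub_cancel, List.cons_append, List.nil_append,
            List.getD_cons_succ]
          rw [List.getD_eq_getElem _ _ (by simpa)]
          simp
        rw [h2, List.sublistsLen_succ_cons]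
        exact (((hperm k hk'.le).map _).append (hperm (k+1) hk)).trans
          (List.perm_append_comm)
end

section
/- Block sizes of the K-combination generator are binomial coefficients: for every K : ℕ, every list xs : List α, and every k ≤ K, the k-th entry of kcombs K xs has length Nat.choose xs.length k. -/
variable {α : Type*}

theorem kcombs_length (K : ℕ) (xs : List α) : (kcombs K xs).length = K + 1 := by
  induction xs with
  | nil => simp [kcombs]
  | cons x xs ih => simp [kcombs, forStep, ih, Nat.add_comm]

/-- Block sizes of the K-combination generator are binomial coefficients. -/
theorem kcombs_block_length (K : ℕ) (xs : List α) :
    ∀ k ≤ K, ((kcombs K xs).getD k []).length = Nat.choose xs.length k := by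
  induction xs with
  | nil =>
    intro k hk
    cases k with
    | zero => simp [kcombs]
    | succ j =>
      simp only [kcombs, List.length_nil]
      rw [Nat.choose_eq_zero_of_lt (Nat.succ_pos j)]
      rw [List.getD_eq_getElem?_getD, List.getElem?_append_right (by simp)]
      simp only [List.length_singleton, Nat.add_sub_cancel]
      rcases lt_or_ge j K with h | h
      · simp [List.getElem?_replicate, h]
      · rw [List.getElem?_eq_none (by simpa)]; simp
  | cons x xs ih =>
    have hlen : (kcombs K xs).length = K + 1 := kcombs_length K xs
    intro k hk
    cases k with
    | zero => simp [kcombs, forStep]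
    | succ j =>
      have hj : j < K := hk
      simp only [kcombs, forStep, hlen, Nat.add_sub_cancel]
      rw [List.getD_eq_getElem?_getD, List.getElem?_append_right (by simp)]
      simp only [List.length_singleton, Nat.add_sub_cancel]
      rw [List.getElem?_map, List.getElem?_range hj]
      simp only [Option.map_some, Option.getD_some, List.length_append,
        List.length_map]
      rw [ih j (le_of_lt hj), ih (j+1) hk, List.length_cons]
      exact Nat.choose_succ_succ _ _
end

section
/- Simplification of the sequential convolution step: let K ≥ 1, x : α, and css : List (List (List α)) with css.length = K+1 and css[0] = [[]]. Then convol (single x K) css = forStep x css, where single x K := [[[]], [[x]]] ++ List.replicate (K−1) []. -/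
variable {α : Type*}

/-- Discrete convolution of two lists of blocks under `cross`: the k-th entry is
the concatenation over j = 0,…,k of `cross (xss[k-j]) (yss[j])`. -/
def convol (xss yss : List (List (List α))) : List (List (List α)) :=
  (List.range xss.length).map (fun k =>
    (List.range (k + 1)).flatMap (fun j => cross (xss.getD (k - j) []) (yss.getD j [])))

def single (x : α) (K : ℕ) : List (List (List α)) :=
  [[[]], [[x]]] ++ List.replicate (K - 1) []

lemma single_getD_two (x : α) (K n : ℕ) : (single x K).getD (n + 2) [] = [] := by
  simp [single, List.getD]

lemma single_length (x : α) (K : ℕ) (hK : 1 ≤ K) : (single x K).length = K + 1 := by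
  simp [single]; omega

lemma cross_nil (yss : List (List α)) : cross [] yss = [] := rfl

lemma cross_one (yss : List (List α)) : cross [[]] yss = yss := by
  simp [cross]

lemma cross_singleton (x : α) (yss : List (List α)) :
    cross [[x]] yss = yss.map (x :: ·) := by
  simp [cross]

/-- Simplification of the sequential convolution step. -/
theorem convol_single_eq_forStep (K : ℕ) (hK : 1 ≤ K) (x : α)
    (css : List (List (List α))) (hlen : css.length = K + 1)
    (h0 : css.getD 0 [] = [[]]) :
    convol (single x K) css = forStep x css := by
  apply List.ext_getElem
  · simp [convol, forStep, single_length x K hK, hlen]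
  intro i hi hi'
  have hiK : i < K + 1 := by
    simpa [convol, single_length x K hK] using hi
  rcases i with _ | n
  · simp only [convol, forStep, List.getElem_map, List.getElem_range, List.singleton_append,
      List.getElem_cons_zero]
    rw [show List.range (0 + 1) = [0] from rfl]
    simp only [List.flatMap_cons, List.flatMap_nil, List.append_nil, Nat.sub_self]
    rw [show (single x K).getD 0 [] = [[]] from rfl, cross_one, h0]
  · have hn : n < K := by omega
    have hL : (List.range (n + 1 + 1)).flatMap
        (fun j => cross ((single x K).getD (n + 1 - j) []) (css.getD j []))
        = (css.getD n []).map (x :: ·) ++ css.getD (n + 1) [] := by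
      have : List.range (n + 2) = List.range n ++ [n] ++ [n + 1] := by
        rw [List.range_succ, List.range_succ]
      rw [this, List.flatMap_append, List.flatMap_append]
      have hz : (List.range n).flatMap
          (fun j => cross ((single x K).getD (n + 1 - j) []) (css.getD j [])) = [] := by
        apply List.flatMap_eq_nil_iff.mpr
        intro j hj
        have hj' : j < n := List.mem_range.mp hj
        have : n + 1 - j = (n - 1 - j) + 2 := by omega
        rw [this, single_getD_two, cross_nil]
      rw [hz]
      have h1 : n + 1 - n = 1 := by omega
      have h2 : n + 1 - (n + 1) = 0 := by omega
      simp only [h1, h2, List.flatMap_cons, List.flatMap_nil, List.append_nil, List.nil_append]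
      rw [show (single x K).getD 1 [] = [[x]] from rfl,
        show (single x K).getD 0 [] = [[]] from rfl, cross_singleton, cross_one]
    simp only [convol, forStep, List.singleton_append, List.getElem_map, List.getElem_range,
      List.getElem_cons_succ]
    exact hL
end

section
/- Correctness of the integer revolving-door generator: for all K N k : ℕ with k ≤ K, the k-th entry of kcombsRevolInt K N is a permutation of List.range (Nat.choose N k); that is, the k-th block lists each integer rank 0, 1, …, C(N,k) − 1 exactly once. -/
variable {α : Type*}

/-- One step of the integer revolving-door generator (for `css` of length K+1). -/
def forRevolInt (M : ℕ) (css : List (List ℕ)) : List (List ℕ) :=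
  [[0]] ++ (List.range (css.length - 1)).map
    (fun i => css.getD (i + 1) [] ++ ((css.getD i []).reverse).map
      (fun j => Nat.choose M (i + 1) - 1 - j))

/-- Integer revolving-door generator. -/
def kcombsRevolInt (K : ℕ) : ℕ → List (List ℕ)
  | 0 => [[0]] ++ List.replicate K []
  | N + 1 => forRevolInt (N + 1) (kcombsRevolInt K N)

lemma kcombsRevolInt_length (K N : ℕ) : (kcombsRevolInt K N).length = K + 1 := by
  induction N with
  | zero => simp [kcombsRevolInt]
  | succ n ih => simp [kcombsRevolInt, forRevolInt, ih]

lemma map_sub_eq_reverse (a b : ℕ) :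
    ((List.range b).map (fun j => a + b - 1 - j))
      = ((List.range b).map (fun j => a + j)).reverse := by
  apply List.ext_getElem
  · simp
  · intro i h1 h2
    rw [List.getElem_reverse]
    simp only [List.getElem_map, List.getElem_range, List.length_map,
      List.length_range] at h1 ⊢
    omega

/-- Correctness of the integer revolving-door generator: the k-th block lists
each rank 0, …, C(N,k) - 1 exactly once. -/
theorem kcombsRevolInt_perm_range (K N k : ℕ) (hk : k ≤ K) :
    ((kcombsRevolInt K N).getD k []).Perm (List.range (Nat.choose N k)) := by
  induction N generalizing k with
  | zero =>
    match k with
    | 0 => simp [kcombsRevolInt, List.range_succ]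
    | k + 1 =>
      have : (kcombsRevolInt K 0).getD (k + 1) [] = [] := by
        show (([[0]] : List (List ℕ)) ++ List.replicate K []).getD (k + 1) [] = []
        rw [List.cons_append, List.nil_append, List.getD_cons_succ]
        rcases Nat.lt_or_ge k K with h | h
        · rw [List.getD_eq_getElem _ _ (by simpa using h)]
          simp
        · rw [List.getD_eq_default _ _ (by simpa using h)]
      rw [this, Nat.choose_eq_zero_of_lt (Nat.succ_pos k), List.range_zero]
  | succ n ih =>
    match k with
    | 0 =>
      show (forRevolInt (n + 1) (kcombsRevolInt K n)).getD 0 [] |>.Perm _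
      simp [forRevolInt, List.range_succ]
    | i + 1 =>
      have hi : i < K := hk
      have hlen : (kcombsRevolInt K n).length = K + 1 := kcombsRevolInt_length K n
      have hentry : (kcombsRevolInt K (n + 1)).getD (i + 1) []
          = (kcombsRevolInt K n).getD (i + 1) []
            ++ (((kcombsRevolInt K n).getD i []).reverse).map
              (fun j => Nat.choose (n + 1) (i + 1) - 1 - j) := by
        show (forRevolInt (n + 1) (kcombsRevolInt K n)).getD (i + 1) [] = _
        rw [forRevolInt, hlen]
        simp only [Nat.add_sub_cancel, List.cons_append, List.nil_append,
          List.getD_cons_succ]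
        rw [List.getD_eq_getElem _ _ (by simpa using hi), List.getElem_map,
          List.getElem_range]
      rw [hentry]
      have hC : Nat.choose (n + 1) (i + 1) = Nat.choose n (i + 1) + Nat.choose n i := by
        rw [Nat.choose_succ_succ]; exact Nat.add_comm _ _
      set a := Nat.choose n (i + 1) with ha
      set b := Nat.choose n i with hb
      have h1 : ((kcombsRevolInt K n).getD (i + 1) []).Perm (List.range a) := ih (i + 1) hk
      have h2 : (((kcombsRevolInt K n).getD i []).reverse).Perm (List.range b) :=
        (List.reverse_perm _).trans (ih i (Nat.le_of_lt hi))
      have h3 : ((((kcombsRevolInt K n).getD i []).reverse).map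
            (fun j => Nat.choose (n + 1) (i + 1) - 1 - j)).Perm
            ((List.range b).map (fun j => a + j)) := by
        refine (h2.map _).trans ?_
        rw [hC, map_sub_eq_reverse]
        exact List.reverse_perm _
      have h4 := h1.append h3
      rw [hC] at h4 ⊢
      rw [List.range_add]
      exact h4
end

section
/- Permutations via interleaving: for all lists xs ys : List α such that (xs ++ ys).Nodup, the list List.permutations (xs ++ ys) is a permutation of merge (List.permutations xs) (List.permutations ys); that is, every permutation of xs ++ ys arises exactly once as an interleaving of a permutation of xs with a permutation of ys. -/
variable {α : Type*}

/-- All interleavings of two lists, preserving the relative order of each. -/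
def interleave : List α → List α → List (List α)
  | xs, [] => [xs]
  | [], ys => [ys]
  | x :: xs, y :: ys =>
      (interleave xs (y :: ys)).map (x :: ·) ++ (interleave (x :: xs) ys).map (y :: ·)

/-- Merge: all interleavings of elements of `xss` with elements of `yss`. -/
def merge (xss yss : List (List α)) : List (List α) :=
  xss.flatMap (fun x => yss.flatMap (fun y => interleave x y))

theorem mem_interleave_perm : ∀ {p q l : List α}, l ∈ interleave p q → l.Perm (p ++ q)
  | p, [], l, h => by
    simp [interleave] at h; simp [h]
  | [], y :: ys, l, h => by
    simp [interleave] at h; simp [h]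
  | x :: xs, y :: ys, l, h => by
    simp only [interleave, List.mem_append, List.mem_map] at h
    rcases h with ⟨a, ha, rfl⟩ | ⟨a, ha, rfl⟩
    · exact (mem_interleave_perm ha).cons x
    · exact ((mem_interleave_perm ha).cons y).trans List.perm_middle.symm

theorem nodup_interleave : ∀ {p q : List α}, (p ++ q).Nodup → (interleave p q).Nodup
  | p, [], h => by simp [interleave]
  | [], y :: ys, h => by simp [interleave]
  | x :: xs, y :: ys, h => by
    have h' : (x :: (xs ++ y :: ys)).Nodup := h
    have hxy : x ≠ y := fun e => (List.nodup_cons.1 h').1 (by simp [e])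
    have h1 : (xs ++ y :: ys).Nodup := (List.nodup_cons.1 h').2
    have h2 : (x :: xs ++ ys).Nodup :=
      h.sublist ((List.sublist_cons_self y ys).append_left _)
    simp only [interleave]
    refine List.Nodup.append ?_ ?_ ?_
    · exact (nodup_interleave h1).map (fun a b hab => by injection hab)
    · exact (nodup_interleave h2).map (fun a b hab => by injection hab)
    · intro l hl hl'
      simp only [List.mem_map] at hl hl'
      obtain ⟨a, _, rfl⟩ := hl
      obtain ⟨b, _, hb⟩ := hl'
      simp only [List.cons.injEq] at hb
      exact hxy hb.1.symm

theorem filter_of_mem_interleave (S : α → Bool) :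
    ∀ {p q l : List α}, (∀ a ∈ p, S a = true) → (∀ a ∈ q, S a = false) →
      l ∈ interleave p q →
      l.filter S = p ∧ l.filter (fun a => !S a) = q
  | p, [], l, hp, hq, h => by
    simp [interleave] at h
    subst h
    constructor
    · exact List.filter_eq_self.2 hp
    · refine List.filter_eq_nil_iff.2 fun a ha => by simp [hp a ha]
  | [], y :: ys, l, hp, hq, h => by
    simp [interleave] at h
    subst h
    constructor
    · refine List.filter_eq_nil_iff.2 fun a ha => by simp [hq a ha]
    · exact List.filter_eq_self.2 fun a ha => by simp [hq a ha]
  | x :: xs, y :: ys, l, hp, hq, h => by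
    simp only [interleave, List.mem_append, List.mem_map] at h
    have hx : S x = true := hp x (by simp)
    have hy : S y = false := hq y (by simp)
    rcases h with ⟨a, ha, rfl⟩ | ⟨a, ha, rfl⟩
    · have := filter_of_mem_interleave S (fun b hb => hp b (List.mem_cons_of_mem _ hb)) hq ha
      constructor
      · simp [List.filter_cons, hx, this.1]
      · simp [List.filter_cons, hx, this.2]
    · have := filter_of_mem_interleave S hp (fun b hb => hq b (List.mem_cons_of_mem _ hb)) ha
      constructor
      · simp [List.filter_cons, hy, this.1]
      · simp [List.filter_cons, hy, this.2]

theorem cons_mem_interleave_left {p q l : List α} (x : α) (h : l ∈ interleave p q) :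
    x :: l ∈ interleave (x :: p) q := by
  cases q with
  | nil =>
    simp only [interleave, List.mem_singleton] at h
    subst h; simp [interleave]
  | cons y ys =>
    simp only [interleave, List.mem_append, List.mem_map]
    exact Or.inl ⟨l, h, rfl⟩

theorem cons_mem_interleave_right {p q l : List α} (y : α) (h : l ∈ interleave p q) :
    y :: l ∈ interleave p (y :: q) := by
  cases p with
  | nil =>
    cases q with
    | nil =>
      simp only [interleave, List.mem_singleton] at h
      subst h; simp [interleave]
    | cons b bs =>
      simp only [interleave, List.mem_singleton] at h
      subst h; simp [interleave]
  | cons x xs =>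
    simp only [interleave, List.mem_append, List.mem_map]
    exact Or.inr ⟨l, h, rfl⟩

theorem filter_mem_interleave (S : α → Bool) :
    ∀ l : List α, l ∈ interleave (l.filter S) (l.filter fun a => !S a)
  | [] => by simp [interleave]
  | x :: l => by
    cases hS : S x with
    | true =>
      rw [List.filter_cons_of_pos hS, List.filter_cons_of_neg (by simp [hS])]
      exact cons_mem_interleave_left x (filter_mem_interleave S l)
    | false =>
      rw [List.filter_cons_of_neg (by simp [hS]), List.filter_cons_of_pos (by simp [hS])]
      exact cons_mem_interleave_right x (filter_mem_interleave S l)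

/-- Permutations via interleaving: every permutation of `xs ++ ys` arises exactly
once as an interleaving of a permutation of `xs` with a permutation of `ys`. -/
theorem permutations_append_perm_merge (xs ys : List α) (h : (xs ++ ys).Nodup) :
    (List.permutations (xs ++ ys)).Perm
      (merge (List.permutations xs) (List.permutations ys)) := by
  classical
  obtain ⟨hxs, hys, hdisj⟩ := List.nodup_append.1 h
  set S : α → Bool := fun a => decide (a ∈ xs) with hSdef
  -- key: for p ~ xs, q ~ ys, membership in interleave p q determines p and q
  have key : ∀ p q l : List α, p.Perm xs → q.Perm ys → l ∈ interleave p q →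
      l.filter S = p ∧ l.filter (fun a => !S a) = q := by
    intro p q l hp hq hl
    refine filter_of_mem_interleave S ?_ ?_ hl
    · intro a ha; simp [hSdef, hp.subset ha]
    · intro a ha
      have : a ∈ ys := hq.subset ha
      simp [hSdef]; exact fun hax => hdisj _ hax _ this rfl
  -- LHS nodup
  have h1 := List.nodup_permutations _ h
  -- RHS nodup
  have h2 : (merge (List.permutations xs) (List.permutations ys)).Nodup := by
    rw [merge, List.nodup_flatMap]
    constructor
    · intro p hp
      rw [List.nodup_flatMap]
      have hp' := List.mem_permutations.1 hp
      constructor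
      · intro q hq
        have hq' := List.mem_permutations.1 hq
        refine nodup_interleave ?_
        rw [List.nodup_append]
        exact ⟨hp'.nodup_iff.2 hxs, hq'.nodup_iff.2 hys,
          fun a ha b hb => hdisj _ (hp'.subset ha) _ (hq'.subset hb)⟩
      · refine List.Pairwise.imp_of_mem ?_ (List.nodup_permutations _ hys)
        intro q q' hq hq' hne l hl hl'
        exact hne (((key p q l hp' (List.mem_permutations.1 hq) hl).2.symm).trans
          (key p q' l hp' (List.mem_permutations.1 hq') hl').2)
    · refine List.Pairwise.imp_of_mem ?_ (List.nodup_permutations _ hxs)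
      intro p p' hp hp' hne l hl hl'
      simp only [Function.onFun, List.mem_flatMap] at hl hl'
      obtain ⟨q, hq, hlq⟩ := hl
      obtain ⟨q', hq', hlq'⟩ := hl'
      exact hne (((key p q l (List.mem_permutations.1 hp)
          (List.mem_permutations.1 hq) hlq).1.symm).trans
        (key p' q' l (List.mem_permutations.1 hp')
          (List.mem_permutations.1 hq') hlq').1)
  refine (List.perm_ext_iff_of_nodup h1 h2).2 fun l => ?_
  simp only [List.mem_permutations, merge, List.mem_flatMap]
  constructor
  · intro hl
    refine ⟨l.filter S, ?_, l.filter (fun a => !S a), ?_, filter_mem_interleave S l⟩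
    · have h3 : (l.filter S).Perm ((xs ++ ys).filter S) := hl.filter S
      rw [List.filter_append] at h3
      have hx : xs.filter S = xs := List.filter_eq_self.2 fun a ha => by simp [hSdef, ha]
      have hy : ys.filter S = [] := List.filter_eq_nil_iff.2 fun a ha => by
        simp [hSdef]; exact fun hax => hdisj _ hax _ ha rfl
      simpa [hx, hy] using h3
    · have h3 : (l.filter fun a => !S a).Perm ((xs ++ ys).filter fun a => !S a) :=
        hl.filter _
      rw [List.filter_append] at h3
      have hx : (xs.filter fun a => !S a) = [] := List.filter_eq_nil_iff.2 fun a ha => by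
        simp [hSdef, ha]
      have hy : (ys.filter fun a => !S a) = ys := List.filter_eq_self.2 fun a ha => by
        simp [hSdef]; exact fun hax => hdisj _ hax _ ha rfl
      simpa [hx, hy] using h3
  · rintro ⟨p, hp, q, hq, hl⟩
    exact (mem_interleave_perm hl).trans (hp.append hq)
end

section
/- Characterization of interleavings: for all lists xs ys : List α with (xs ++ ys).Nodup and every zs : List α, zs ∈ interleave xs ys if and only if xs.Sublist zs, ys.Sublist zs, and zs is a permutation of xs ++ ys; that is, interleave xs ys produces exactly the lists that contain all elements of xs and ys and maintain the relative ordering of the elements of both input lists. -/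
variable {α : Type*}

lemma interleave_nil_left (ys : List α) : interleave [] ys = [ys] := by
  cases ys <;> simp [interleave]

lemma interleave_nil_right (xs : List α) : interleave xs [] = [xs] := by
  cases xs <;> simp [interleave]

lemma interleave_cons (x y : α) (xs ys : List α) :
    interleave (x :: xs) (y :: ys) =
      (interleave xs (y :: ys)).map (x :: ·) ++ (interleave (x :: xs) ys).map (y :: ·) := by
  rw [interleave]

/-- Characterization of interleavings. -/
theorem mem_interleave_iff (xs ys : List α) (h : (xs ++ ys).Nodup) (zs : List α) :
    zs ∈ interleave xs ys ↔
      (xs.Sublist zs ∧ ys.Sublist zs ∧ zs.Perm (xs ++ ys)) := by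
  induction xs generalizing ys zs with
  | nil =>
    rw [interleave_nil_left]
    constructor
    · intro hm
      rw [List.mem_singleton] at hm
      subst hm
      exact ⟨List.nil_sublist _, List.Sublist.refl _, by simp⟩
    · rintro ⟨-, hs, hp⟩
      rw [List.mem_singleton]
      have hl : ys.length = zs.length := by simpa using hp.length_eq.symm
      exact (hs.eq_of_length hl).symm
  | cons x xs ihx =>
    induction ys generalizing zs with
    | nil =>
      rw [interleave_nil_right]
      constructor
      · intro hm
        rw [List.mem_singleton] at hm
        subst hm
        exact ⟨List.Sublist.refl _, List.nil_sublist _, by simp⟩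
      · rintro ⟨hs, -, hp⟩
        rw [List.mem_singleton]
        have hl : (x :: xs).length = zs.length := by simpa using hp.length_eq.symm
        exact (hs.eq_of_length hl).symm
    | cons y ys ihy =>
      have hx : x ∉ xs ++ y :: ys := (List.nodup_cons.mp h).1
      have h' : (xs ++ y :: ys).Nodup := (List.nodup_cons.mp h).2
      have hxy : x ≠ y := fun e => hx (by simp [e])
      have h'' : ((x :: xs) ++ ys).Nodup :=
        h.sublist ((List.append_sublist_append_left (x :: xs)).mpr
          (List.sublist_cons_self y ys))
      rw [interleave_cons]
      constructor
      · intro hm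
        rcases List.mem_append.mp hm with hm | hm
        · obtain ⟨ws, hw, rfl⟩ := List.mem_map.mp hm
          obtain ⟨hs1, hs2, hp⟩ := (ihx (y :: ys) h' ws).mp hw
          exact ⟨hs1.cons₂ x, hs2.cons x, hp.cons x⟩
        · obtain ⟨ws, hw, rfl⟩ := List.mem_map.mp hm
          obtain ⟨hs1, hs2, hp⟩ := (ihy h'' ws).mp hw
          exact ⟨hs1.cons y, hs2.cons₂ y,
            ((hp.cons y).trans List.perm_middle.symm)⟩
      · rintro ⟨h1, h2, h3⟩
        cases zs with
        | nil => exact absurd (List.eq_nil_of_sublist_nil h1) (by simp)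
        | cons z zs' =>
          have hzs : (z :: zs').Nodup := h3.nodup_iff.mpr h
          cases h1 with
          | cons_cons _ h1' =>
            cases h2 with
            | cons_cons _ h2' => exact absurd rfl hxy
            | cons _ h2' =>
              have hp' : zs'.Perm (xs ++ y :: ys) := h3.cons_inv
              have : zs' ∈ interleave xs (y :: ys) :=
                (ihx (y :: ys) h' zs').mpr ⟨h1', h2', hp'⟩
              exact List.mem_append.mpr (Or.inl (List.mem_map.mpr ⟨zs', this, rfl⟩))
          | cons _ h1' =>
            cases h2 with
            | cons_cons _ h2' =>
              have hp' : zs'.Perm ((x :: xs) ++ ys) :=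
                (h3.trans List.perm_middle).cons_inv
              have : zs' ∈ interleave (x :: xs) ys :=
                (ihy h'' zs').mpr ⟨h1', h2', hp'⟩
              exact List.mem_append.mpr (Or.inr (List.mem_map.mpr ⟨zs', this, rfl⟩))
            | cons _ h2' =>
              exfalso
              have hz : z ∈ (x :: xs) ++ (y :: ys) := h3.mem_iff.mp (by simp)
              have hznot : z ∉ zs' := (List.nodup_cons.mp hzs).1
              rcases List.mem_append.mp hz with hz | hz
              · exact hznot (h1'.mem hz)
              · exact hznot (h2'.mem hz)
end
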